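/- arXiv:1406.2855 — 7 statements merged into one kernel-verified Lean document; each statement's English description precedes it below -/
import Mathlib

section
/- Let n ≥ 3 be an odd number of individuals and m ≥ 1 a number of issues. The majority rule Maj is collectively rational with respect to an integrity constraint X ⊆ {0,1}^m if and only if X is expressible by clauses of size at most 2. -/
def Maj {n m : ℕ} (P : Fin n → Fin m → Bool) : Fin m → Bool :=
  fun j => decide (n < 2 * (Finset.univ.filter fun i => P i j = true).card)

def CollectivelyRational {n m : ℕ}
    (F : (Fin n → Fin m → Bool) → (Fin m → Bool)) (X : Set (Fin m → Bool)) : Prop :=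
  ∀ P : Fin n → Fin m → Bool, (∀ i, P i ∈ X) → F P ∈ X

/-- A clause is a finite set of literals `(issue, value)` with pairwise distinct issues. -/
def IsClause {m : ℕ} (C : Finset (Fin m × Bool)) : Prop :=
  ∀ l₁ ∈ C, ∀ l₂ ∈ C, l₁.1 = l₂.1 → l₁ = l₂

/-- A ballot satisfies a clause iff it satisfies at least one of its literals. -/
def SatClause {m : ℕ} (B : Fin m → Bool) (C : Finset (Fin m × Bool)) : Prop :=
  ∃ l ∈ C, B l.1 = l.2

/-- `X` is expressible by a finite family of clauses of size at most 2. -/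
def ExpressibleBy2Clauses {m : ℕ} (X : Set (Fin m → Bool)) : Prop :=
  ∃ F : Finset (Finset (Fin m × Bool)),
    (∀ C ∈ F, IsClause C ∧ C.card ≤ 2) ∧
    ∀ B : Fin m → Bool, B ∈ X ↔ ∀ C ∈ F, SatClause B C

/-- Coordinatewise median of three ballots. -/
def med {m : ℕ} (x y z : Fin m → Bool) : Fin m → Bool :=
  fun j => x j && y j || x j && z j || y j && z j

/-- If majority is collectively rational, `X` is closed under ternary median. -/
lemma med_mem {n m : ℕ} (hn3 : 3 ≤ n) (hodd : Odd n)
    {X : Set (Fin m → Bool)} (hCR : CollectivelyRational (Maj (n := n) (m := m)) X)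
    {x y z : Fin m → Bool} (hx : x ∈ X) (hy : y ∈ X) (hz : z ∈ X) :
    med x y z ∈ X := by
  obtain ⟨k, hk⟩ : ∃ k, n = 2 * k + 1 := by
    obtain ⟨k, hk⟩ := hodd; exact ⟨k, by omega⟩
  have hk1 : 1 ≤ k := by omega
  set P : Fin n → Fin m → Bool :=
    fun i => if i.val < k then x else if i.val < 2 * k then y else z with hP
  have hmem : ∀ i, P i ∈ X := by
    intro i; simp only [hP]; split_ifs <;> assumption
  have hMP := hCR P hmem
  have hcount : ∀ j : Fin m, (Finset.univ.filter fun i : Fin n => P i j = true).card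
      = k * (if x j = true then 1 else 0) + k * (if y j = true then 1 else 0)
        + (if z j = true then 1 else 0) := by
    intro j
    rw [Finset.card_filter]
    set f : ℕ → ℕ :=
      fun t => if (if t < k then x j else if t < 2 * k then y j else z j) = true
        then 1 else 0 with hf
    have h1 : ∀ i : Fin n, (if P i j = true then 1 else 0) = f i.val := by
      intro i; simp only [hP, hf]; split_ifs <;> rfl
    rw [Finset.sum_congr rfl (fun i _ => h1 i), Fin.sum_univ_eq_sum_range, hk]
    have h2 : 2 * k + 1 = k + (k + 1) := by omega
    rw [h2, Finset.sum_range_add, Finset.sum_range_succ]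
    have h3 : ∀ t ∈ Finset.range k, f t = (if x j = true then 1 else 0) := by
      intro t ht; simp only [hf]
      rw [if_pos (Finset.mem_range.mp ht)]
    have h4 : ∀ t ∈ Finset.range k, f (k + t) = (if y j = true then 1 else 0) := by
      intro t ht; have := Finset.mem_range.mp ht
      simp only [hf]
      rw [if_neg (show ¬(k + t < k) by omega), if_pos (show k + t < 2 * k by omega)]
    have h5 : f (k + k) = (if z j = true then 1 else 0) := by
      simp only [hf]
      rw [if_neg (show ¬(k + k < k) by omega), if_neg (show ¬(k + k < 2 * k) by omega)]
    rw [Finset.sum_congr rfl h3, Finset.sum_congr rfl h4, h5,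
      Finset.sum_const, Finset.sum_const, Finset.card_range, smul_eq_mul, smul_eq_mul]
    ring
  have hMeq : Maj P = med x y z := by
    funext j
    cases hxj : x j <;> cases hyj : y j <;> cases hzj : z j <;>
      simp [Maj, med, hcount j, hxj, hyj, hzj] <;> omega
  rwa [hMeq] at hMP

/-- If `X` is median-closed and agrees with `B` on every set of at most two issues,
then it agrees with `B` on every finite set of issues. -/
lemma exists_agree {m : ℕ} {X : Set (Fin m → Bool)}
    (hmed : ∀ x ∈ X, ∀ y ∈ X, ∀ z ∈ X, med x y z ∈ X)
    (B : Fin m → Bool)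
    (hpair : ∀ S : Finset (Fin m), S.card ≤ 2 → ∃ x ∈ X, ∀ j ∈ S, x j = B j) :
    ∀ S : Finset (Fin m), ∃ x ∈ X, ∀ j ∈ S, x j = B j := by
  intro S
  induction S using Finset.strongInduction with
  | _ S ih =>
    by_cases hS : S.card ≤ 2
    · exact hpair S hS
    · have h3 : 2 < S.card := by omega
      obtain ⟨a, b, c, ha, hb, hc, hab, hac, hbc⟩ := Finset.two_lt_card_iff.mp h3
      obtain ⟨x, hxX, hxa⟩ := ih (S.erase a) (Finset.erase_ssubset ha)
      obtain ⟨y, hyX, hya⟩ := ih (S.erase b) (Finset.erase_ssubset hb)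
      obtain ⟨z, hzX, hza⟩ := ih (S.erase c) (Finset.erase_ssubset hc)
      refine ⟨med x y z, hmed x hxX y hyX z hzX, ?_⟩
      intro j hj
      have hx' : j ≠ a → x j = B j := fun h => hxa j (Finset.mem_erase.mpr ⟨h, hj⟩)
      have hy' : j ≠ b → y j = B j := fun h => hya j (Finset.mem_erase.mpr ⟨h, hj⟩)
      have hz' : j ≠ c → z j = B j := fun h => hza j (Finset.mem_erase.mpr ⟨h, hj⟩)
      rcases eq_or_ne j a with rfl | hja
      · have h1 := hy' hab
        have h2 := hz' hac
        simp only [med]; rw [h1, h2]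
        cases hv : x j <;> cases hB : B j <;> rfl
      · rcases eq_or_ne j b with rfl | hjb
        · have h1 := hx' hja
          have h2 := hz' hbc
          simp only [med]; rw [h1, h2]
          cases hv : y j <;> cases hB : B j <;> rfl
        · have h1 := hx' hja
          have h2 := hy' hjb
          simp only [med]; rw [h1, h2]
          cases hv : z j <;> cases hB : B j <;> rfl

theorem majority_CR_iff_expressible_by_2clauses
    (n m : ℕ) (hn3 : 3 ≤ n) (hodd : Odd n) (hm : 1 ≤ m)
    (X : Set (Fin m → Bool)) :
    CollectivelyRational (Maj (n := n) (m := m)) X ↔ ExpressibleBy2Clauses X := by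
  constructor
  · -- CR → expressible
    intro hCR
    classical
    set Fam : Finset (Finset (Fin m × Bool)) :=
      Finset.univ.filter
        (fun C => IsClause C ∧ C.card ≤ 2 ∧ ∀ B ∈ X, SatClause B C) with hFam
    refine ⟨Fam, ?_, ?_⟩
    · intro C hC
      have h := Finset.mem_filter.mp hC
      exact ⟨h.2.1, h.2.2.1⟩
    · intro B
      constructor
      · intro hBX C hC
        exact (Finset.mem_filter.mp hC).2.2.2 B hBX
      · intro hB
        have hmed : ∀ x ∈ X, ∀ y ∈ X, ∀ z ∈ X, med x y z ∈ X :=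
          fun x hx y hy z hz => med_mem hn3 hodd hCR hx hy hz
        have hpair : ∀ S : Finset (Fin m), S.card ≤ 2 →
            ∃ x ∈ X, ∀ j ∈ S, x j = B j := by
          intro S hS
          by_contra hno
          push_neg at hno
          set C : Finset (Fin m × Bool) := S.image (fun j => (j, !B j)) with hC
          have hclause : IsClause C := by
            intro l₁ h₁ l₂ h₂ h12
            obtain ⟨j₁, _, rfl⟩ := Finset.mem_image.mp h₁
            obtain ⟨j₂, _, rfl⟩ := Finset.mem_image.mp h₂
            simp only at h12
            subst h12; rfl
          have hcardC : C.card ≤ 2 := le_trans (Finset.card_image_le) hS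
          have hent : ∀ x ∈ X, SatClause x C := by
            intro x hx
            obtain ⟨j, hj, hne⟩ := hno x hx
            refine ⟨(j, !B j), Finset.mem_image_of_mem _ hj, ?_⟩
            cases hB' : B j <;> cases hx' : x j <;> simp_all
          have hCF : C ∈ Fam := by
            rw [hFam]
            exact Finset.mem_filter.mpr ⟨Finset.mem_univ C, hclause, hcardC, hent⟩
          obtain ⟨l, hl, hsat⟩ := hB C hCF
          obtain ⟨j, hj, rfl⟩ := Finset.mem_image.mp hl
          simp at hsat
        obtain ⟨x, hxX, hxall⟩ := exists_agree hmed B hpair Finset.univ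
        have hxB : x = B := funext fun j => hxall j (Finset.mem_univ j)
        exact hxB ▸ hxX
  · -- expressible → CR
    rintro ⟨F, hF, hX⟩ P hP
    rw [hX]
    intro C hC
    by_contra hnot
    have hcard := (hF C hC).2
    have hsat : ∀ i, SatClause (P i) C := fun i => (hX (P i)).mp (hP i) C hC
    classical
    set A : Fin m × Bool → Finset (Fin n) :=
      fun l => Finset.univ.filter (fun i => P i l.1 = l.2) with hA
    have hodd' : n % 2 = 1 := Nat.odd_iff.mp hodd
    have hAl : ∀ l ∈ C, 2 * (A l).card < n := by
      intro l hl
      have hMaj : ¬ (Maj P l.1 = l.2) := fun h => hnot ⟨l, hl, h⟩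
      cases hl2 : l.2
      · -- Maj P l.1 = true
        have hMt : Maj P l.1 = true := by
          cases h : Maj P l.1
          · exact absurd (h.trans hl2.symm) hMaj
          · rfl
        have hlt : n < 2 * ((Finset.univ.filter fun i => P i l.1 = true).card) := by
          simpa [Maj] using hMt
        have hsum : ((Finset.univ.filter fun i => P i l.1 = true)).card
            + ((Finset.univ.filter fun i => ¬(P i l.1 = true))).card = n := by
          rw [Finset.card_filter_add_card_filter_not]
          simp
        have heq : (A l) = (Finset.univ.filter fun i => ¬(P i l.1 = true)) := by
          simp only [hA, hl2]
          apply Finset.filter_congr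
          intro i _
          simp
        rw [heq]
        omega
      · -- Maj P l.1 = false
        have hMf : Maj P l.1 = false := by
          cases h : Maj P l.1
          · rfl
          · exact absurd (h.trans hl2.symm) hMaj
        have hle : ¬ (n < 2 * ((Finset.univ.filter fun i => P i l.1 = true).card)) := by
          simpa [Maj] using hMf
        have heq : (A l) = (Finset.univ.filter fun i => P i l.1 = true) := by
          simp only [hA, hl2]
        rw [heq]
        omega
    have hcover : Finset.univ ⊆ C.biUnion A := by
      intro i _
      obtain ⟨l, hl, hsl⟩ := hsat i
      exact Finset.mem_biUnion.mpr ⟨l, hl, Finset.mem_filter.mpr ⟨Finset.mem_univ i, hsl⟩⟩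
    have h1 : n ≤ ∑ l ∈ C, (A l).card := by
      calc n = (Finset.univ : Finset (Fin n)).card := by simp
        _ ≤ (C.biUnion A).card := Finset.card_le_card hcover
        _ ≤ ∑ l ∈ C, (A l).card := Finset.card_biUnion_le
    have h2 : ∑ l ∈ C, (A l).card ≤ C.card * ((n - 1) / 2) := by
      have := Finset.sum_le_card_nsmul C (fun l => (A l).card) ((n - 1) / 2)
        (fun l hl => by have := hAl l hl; show (A l).card ≤ (n - 1) / 2; omega)
      simpa using this
    have h3 : C.card * ((n - 1) / 2) ≤ 2 * ((n - 1) / 2) :=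
      Nat.mul_le_mul_right _ hcard
    omega
end

section
/- Let n be odd. If an integrity constraint X ⊆ {0,1}^m is expressible by clauses of size at most 2, then the majority rule Maj on n individuals is collectively rational with respect to X. -/
theorem expressible_by_2clauses_implies_majority_CR
    (n m : ℕ) (hodd : Odd n) (X : Set (Fin m → Bool))
    (hX : ExpressibleBy2Clauses X) :
    CollectivelyRational (Maj (n := n) (m := m)) X := by
  obtain ⟨F, hF, hiff⟩ := hX
  intro P hP
  rw [hiff]
  intro C hC
  have hcard := (hF C hC).2
  have hsat : ∀ i, ∃ l ∈ C, P i l.1 = l.2 := fun i => (hiff (P i)).1 (hP i) C hC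
  -- A l : voters satisfying literal l
  set A : Fin m × Bool → Finset (Fin n) :=
    fun l => Finset.univ.filter (fun i => P i l.1 = l.2) with hA
  have key : ∃ l ∈ C, n < 2 * (A l).card := by
    by_contra h
    push_neg at h
    have hsub : (Finset.univ : Finset (Fin n)) ⊆ C.biUnion A := by
      intro i _
      obtain ⟨l, hl, hli⟩ := hsat i
      exact Finset.mem_biUnion.2 ⟨l, hl, by simp [hA, hli]⟩
    have h1 : n ≤ ∑ l ∈ C, (A l).card := by
      calc n = (Finset.univ : Finset (Fin n)).card := by simp
        _ ≤ (C.biUnion A).card := Finset.card_le_card hsub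
        _ ≤ ∑ l ∈ C, (A l).card := Finset.card_biUnion_le
    have h2 : ∀ l ∈ C, (A l).card * 2 ≤ n - 1 := by
      intro l hl
      have := h l hl
      have hne : 2 * (A l).card ≠ n := by
        intro he
        rcases hodd with ⟨k, hk⟩
        omega
      omega
    have h3 : (∑ l ∈ C, (A l).card) * 2 ≤ C.card * (n - 1) := by
      rw [Finset.sum_mul]
      calc ∑ l ∈ C, (A l).card * 2 ≤ ∑ _l ∈ C, (n - 1) :=
            Finset.sum_le_sum h2
        _ = C.card * (n - 1) := by rw [Finset.sum_const, smul_eq_mul]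
    have hn : 0 < n := hodd.pos
    have h4 : C.card * (n - 1) ≤ 2 * (n - 1) := Nat.mul_le_mul_right _ hcard
    omega
  obtain ⟨l, hl, hmaj⟩ := key
  refine ⟨l, hl, ?_⟩
  have hsum : (Finset.univ.filter (fun i => P i l.1 = true)).card +
      (Finset.univ.filter (fun i => ¬ P i l.1 = true)).card = n := by
    rw [Finset.card_filter_add_card_filter_not]
    simp
  cases hb : l.2 with
  | true =>
    simp only [Maj, decide_eq_true_eq]
    have : A l = Finset.univ.filter (fun i => P i l.1 = true) := by
      simp [hA, hb]
    rwa [this] at hmaj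
  | false =>
    simp only [Maj, decide_eq_false_iff_not, not_lt]
    have : A l = Finset.univ.filter (fun i => ¬ P i l.1 = true) := by
      simp [hA, hb]
    rw [this] at hmaj
    omega
end

section
/- Let n ≥ 3 be odd. If the majority rule Maj on n individuals is collectively rational with respect to an integrity constraint X ⊆ {0,1}^m, then X is expressible by clauses of size at most 2. -/
/-- The ternary median (majority of three) on booleans. -/
def med3 (a b c : Bool) : Bool := (a && b) || (a && c) || (b && c)

lemma med3_abb (a b : Bool) : med3 a b b = b := by cases a <;> cases b <;> rfl
lemma med3_bba (a b : Bool) : med3 b b a = b := by cases a <;> cases b <;> rfl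
lemma med3_bab (a b : Bool) : med3 b a b = b := by cases a <;> cases b <;> rfl

lemma bool_ne_iff {a b : Bool} : a ≠ b ↔ a = !b := by cases a <;> cases b <;> simp

/-- Collective rationality of majority implies `X` is closed under pointwise median. -/
lemma med_closed (n m : ℕ) (hn3 : 3 ≤ n) (hodd : Odd n) (X : Set (Fin m → Bool))
    (hCR : CollectivelyRational (Maj (n := n) (m := m)) X)
    (B1 B2 B3 : Fin m → Bool) (h1 : B1 ∈ X) (h2 : B2 ∈ X) (h3 : B3 ∈ X) :
    (fun j => med3 (B1 j) (B2 j) (B3 j)) ∈ X := by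
  obtain ⟨k, hk⟩ := hodd
  have hk1 : 1 ≤ k := by omega
  set P : Fin n → Fin m → Bool := fun i j =>
    if (i : ℕ) < k then B1 j else if (i : ℕ) < 2*k then B2 j else B3 j with hP
  have hPX : ∀ i, P i ∈ X := by
    intro i
    simp only [hP]
    split_ifs <;> [exact h1; exact h2; exact h3]
  have hM := hCR P hPX
  have hcount : ∀ j : Fin m,
      (Finset.univ.filter fun i : Fin n => P i j = true).card =
        (if B1 j then k else 0) + (if B2 j then k else 0) + (if B3 j then 1 else 0) := by
    intro j
    have step0 : (Finset.univ.filter fun i : Fin n => P i j = true).card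
        = ∑ i : Fin n, (fun x : ℕ =>
            if (if x < k then B1 j else if x < 2*k then B2 j else B3 j) = true
              then 1 else 0) (i : ℕ) := by
      rw [Finset.card_filter]
    rw [step0]
    rw [Fin.sum_univ_eq_sum_range (fun x : ℕ =>
      if (if x < k then B1 j else if x < 2*k then B2 j else B3 j) = true then 1 else 0) n]
    subst hk
    rw [Finset.sum_range_succ]
    rw [Finset.range_eq_Ico, ← Finset.sum_Ico_consecutive _ (Nat.zero_le k) (by omega : k ≤ 2*k)]
    have e1 : ∑ x ∈ Finset.Ico 0 k,
        (if (if x < k then B1 j else if x < 2*k then B2 j else B3 j) = true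
          then 1 else 0) = if B1 j then k else 0 := by
      have hcg : ∀ x ∈ Finset.Ico 0 k,
          (if (if x < k then B1 j else if x < 2*k then B2 j else B3 j) = true
            then 1 else 0) = (if B1 j = true then 1 else 0) := by
        intro x hx
        have : x < k := (Finset.mem_Ico.mp hx).2
        simp [this]
      rw [Finset.sum_congr rfl hcg, Finset.sum_const, Nat.card_Ico, smul_eq_mul]
      cases B1 j <;> simp
    have e2 : ∑ x ∈ Finset.Ico k (2*k),
        (if (if x < k then B1 j else if x < 2*k then B2 j else B3 j) = true
          then 1 else 0) = if B2 j then k else 0 := by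
      have hcg : ∀ x ∈ Finset.Ico k (2*k),
          (if (if x < k then B1 j else if x < 2*k then B2 j else B3 j) = true
            then 1 else 0) = (if B2 j = true then 1 else 0) := by
        intro x hx
        have h1' : ¬ x < k := not_lt.mpr (Finset.mem_Ico.mp hx).1
        have h2' : x < 2*k := (Finset.mem_Ico.mp hx).2
        simp [h1', h2']
      rw [Finset.sum_congr rfl hcg, Finset.sum_const, Nat.card_Ico, smul_eq_mul]
      cases B2 j <;> simp <;> omega
    have e3 : (if (if 2*k < k then B1 j else if 2*k < 2*k then B2 j else B3 j) = true
        then 1 else 0) = if B3 j then 1 else 0 := by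
      have h1' : ¬ (2*k < k) := by omega
      simp [h1']
    rw [e1, e2, e3]
  have hMaj : Maj P = fun j => med3 (B1 j) (B2 j) (B3 j) := by
    funext j
    have hc := hcount j
    show decide (n < 2 * (Finset.univ.filter fun i : Fin n => P i j = true).card)
        = med3 (B1 j) (B2 j) (B3 j)
    rw [hc]
    have harith : (n < 2 * ((if B1 j then k else 0) + (if B2 j then k else 0)
        + (if B3 j then 1 else 0))) ↔ med3 (B1 j) (B2 j) (B3 j) = true := by
      cases B1 j <;> cases B2 j <;> cases B3 j <;> simp [med3] <;> omega
    by_cases hmv : med3 (B1 j) (B2 j) (B3 j) = true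
    · rw [hmv, decide_eq_true_eq]
      exact harith.mpr hmv
    · rw [Bool.not_eq_true] at hmv
      rw [hmv, decide_eq_false_iff_not]
      intro hlt
      exact absurd (harith.mp hlt) (by rw [hmv]; simp)
  rw [← hMaj]
  exact hM

theorem majority_CR_implies_expressible_by_2clauses
    (n m : ℕ) (hn3 : 3 ≤ n) (hodd : Odd n) (X : Set (Fin m → Bool))
    (hCR : CollectivelyRational (Maj (n := n) (m := m)) X) :
    ExpressibleBy2Clauses X := by
  classical
  have hmed : ∀ B1 B2 B3 : Fin m → Bool, B1 ∈ X → B2 ∈ X → B3 ∈ X →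
      (fun j => med3 (B1 j) (B2 j) (B3 j)) ∈ X :=
    fun B1 B2 B3 h1 h2 h3 => med_closed n m hn3 hodd X hCR B1 B2 B3 h1 h2 h3
  refine ⟨Finset.univ.filter
      (fun C => IsClause C ∧ C.card ≤ 2 ∧ ∀ B', B' ∈ X → SatClause B' C), ?_, ?_⟩
  · intro C hC
    rw [Finset.mem_filter] at hC
    exact ⟨hC.2.1, hC.2.2.1⟩
  intro B
  constructor
  · intro hB C hC
    rw [Finset.mem_filter] at hC
    exact hC.2.2.2 B hB
  intro hB
  -- X is nonempty
  have hXne : ∃ C0, C0 ∈ X := by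
    by_contra h
    push_neg at h
    have hmem : (∅ : Finset (Fin m × Bool)) ∈ Finset.univ.filter
        (fun C => IsClause C ∧ C.card ≤ 2 ∧ ∀ B', B' ∈ X → SatClause B' C) := by
      rw [Finset.mem_filter]
      refine ⟨Finset.mem_univ _, ?_, by simp, ?_⟩
      · intro l₁ hl₁; exact absurd hl₁ (Finset.notMem_empty _)
      · intro B' hB'; exact absurd hB' (h B')
    obtain ⟨l, hl, _⟩ := hB ∅ hmem
    exact absurd hl (Finset.notMem_empty _)
  -- any pair of values of B can be matched inside X
  have hpair : ∀ j k : Fin m, ∃ D, D ∈ X ∧ D j = B j ∧ D k = B k := by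
    intro j k
    by_contra h
    push_neg at h
    set C : Finset (Fin m × Bool) := insert (j, !B j) {(k, !B k)} with hCdef
    have hclause : IsClause C := by
      intro l₁ hl₁ l₂ hl₂ heq
      rw [hCdef, Finset.mem_insert, Finset.mem_singleton] at hl₁ hl₂
      rcases hl₁ with rfl | rfl <;> rcases hl₂ with rfl | rfl <;>
        simp_all
    have himp : ∀ B', B' ∈ X → SatClause B' C := by
      intro B' hB'
      rcases Classical.em (B' j = B j) with hj | hj
      · have hk : B' k ≠ B k := fun hk => h B' hB' hj hk
        refine ⟨(k, !B k), by simp [hCdef], ?_⟩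
        simpa using bool_ne_iff.mp hk
      · refine ⟨(j, !B j), by simp [hCdef], ?_⟩
        simpa using bool_ne_iff.mp hj
    have hmem : C ∈ Finset.univ.filter
        (fun C => IsClause C ∧ C.card ≤ 2 ∧ ∀ B', B' ∈ X → SatClause B' C) := by
      rw [Finset.mem_filter]
      refine ⟨Finset.mem_univ _, hclause, ?_, himp⟩
      calc C.card ≤ ({(k, !B k)} : Finset (Fin m × Bool)).card + 1 :=
            Finset.card_insert_le _ _
        _ = 2 := by simp
    obtain ⟨l, hl, hsat⟩ := hB C hmem
    rw [hCdef, Finset.mem_insert, Finset.mem_singleton] at hl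
    rcases hl with rfl | rfl <;> simp at hsat
  -- agreement set
  set ag : (Fin m → Bool) → Finset (Fin m) :=
    fun D => Finset.univ.filter (fun j => D j = B j) with hag
  have hkey : ∀ t : ℕ, ∀ C : Fin m → Bool, C ∈ X → m ≤ (ag C).card + t → B ∈ X := by
    intro t
    induction t with
    | zero =>
      intro C hC hcard
      have huniv : ag C = Finset.univ := by
        apply Finset.eq_univ_of_card
        have h1 : (ag C).card ≤ m := by
          have := Finset.card_le_univ (ag C)
          rwa [Fintype.card_fin] at this
        have h3 : Fintype.card (Fin m) = m := Fintype.card_fin m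
        omega
      have : C = B := by
        funext j
        have : j ∈ ag C := huniv ▸ Finset.mem_univ j
        rw [hag, Finset.mem_filter] at this
        exact this.2
      exact this ▸ hC
    | succ t ih =>
      intro C hC hcard
      by_cases hall : ∀ j, C j = B j
      · have : C = B := funext hall
        exact this ▸ hC
      · push_neg at hall
        obtain ⟨j, hj⟩ := hall
        set S : Finset (Fin m → Bool) :=
          Finset.univ.filter (fun D => D ∈ X ∧ D j = B j) with hS
        have hSne : S.Nonempty := by
          obtain ⟨D, hDX, hDj, _⟩ := hpair j j
          exact ⟨D, by rw [hS, Finset.mem_filter]; exact ⟨Finset.mem_univ _, hDX, hDj⟩⟩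
        obtain ⟨C', hC'S, hmax⟩ :=
          Finset.exists_max_image S (fun D => (ag C ∩ ag D).card) hSne
        rw [hS, Finset.mem_filter] at hC'S
        obtain ⟨-, hC'X, hC'j⟩ := hC'S
        have hsub : ag C ⊆ ag C' := by
          intro k hk
          by_contra hkC'
          obtain ⟨D, hDX, hDj, hDk⟩ := hpair j k
          set E : Fin m → Bool := fun l => med3 (C l) (C' l) (D l) with hE
          have hEX : E ∈ X := hmed _ _ _ hC hC'X hDX
          have hEj : E j = B j := by
            rw [hE]; simp only [hC'j, hDj]; exact med3_abb _ _
          have hES : E ∈ S := by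
            rw [hS, Finset.mem_filter]; exact ⟨Finset.mem_univ _, hEX, hEj⟩
          have hkag : k ∈ ag C := hk
          have hkB : C k = B k := by
            rw [hag, Finset.mem_filter] at hkag; exact hkag.2
          have hEk : E k = B k := by
            rw [hE]; simp only [hkB, hDk]; exact med3_bab _ _
          have hkE : k ∈ ag C ∩ ag E := by
            rw [Finset.mem_inter, hag, Finset.mem_filter, Finset.mem_filter]
            exact ⟨⟨Finset.mem_univ _, hkB⟩, Finset.mem_univ _, hEk⟩
          have hkC'' : k ∉ ag C ∩ ag C' := by
            rw [Finset.mem_inter]; exact fun h => hkC' h.2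
          have hss : ag C ∩ ag C' ⊆ ag C ∩ ag E := by
            intro l hl
            rw [Finset.mem_inter, hag, Finset.mem_filter, Finset.mem_filter] at hl
            obtain ⟨⟨-, hlC⟩, -, hlC'⟩ := hl
            have hEl : E l = B l := by
              rw [hE]; simp only [hlC, hlC']; exact med3_bba _ _
            rw [Finset.mem_inter, hag, Finset.mem_filter, Finset.mem_filter]
            exact ⟨⟨Finset.mem_univ _, hlC⟩, Finset.mem_univ _, hEl⟩
          have hlt : (ag C ∩ ag C').card < (ag C ∩ ag E).card :=
            Finset.card_lt_card ⟨hss, fun h => hkC'' (h hkE)⟩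
          exact absurd (hmax E hES) (not_le.mpr hlt)
        have hjC : j ∉ ag C := by
          rw [hag, Finset.mem_filter]; exact fun h => hj h.2
        have hjC' : j ∈ ag C' := by
          rw [hag, Finset.mem_filter]; exact ⟨Finset.mem_univ _, hC'j⟩
        have hins : insert j (ag C) ⊆ ag C' := Finset.insert_subset hjC' hsub
        have hcard' : (ag C).card + 1 ≤ (ag C').card := by
          have := Finset.card_le_card hins
          rwa [Finset.card_insert_of_notMem hjC] at this
        exact ih C' hC'X (by omega)
  obtain ⟨C0, hC0⟩ := hXne
  exact hkey m C0 hC0 (by omega)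
end

section
/- Let n be odd and let C be a clause containing at most 2 literals. Then the majority rule Maj on n individuals is collectively rational with respect to the integrity constraint X consisting of exactly those ballots in {0,1}^m that satisfy C. -/
lemma maj_of_majority {n m : ℕ} (P : Fin n → Fin m → Bool) (j : Fin m) (b : Bool)
    (h : n < 2 * (Finset.univ.filter fun i => P i j = b).card) : Maj P j = b := by
  have hsum : (Finset.univ.filter fun i => P i j = true).card
      + (Finset.univ.filter fun i => P i j = false).card = n := by
    have := Finset.card_filter_add_card_filter_not
      (s := (Finset.univ : Finset (Fin n))) (p := fun i => P i j = true)
    simpa using this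
  cases b with
  | true => simp only [Maj, decide_eq_true_eq]; exact h
  | false =>
    simp only [Maj]
    have : ¬ (n < 2 * (Finset.univ.filter fun i => P i j = true).card) := by omega
    exact decide_eq_false this

theorem majority_CR_wrt_2clause
    (n m : ℕ) (hodd : Odd n) (C : Finset (Fin m × Bool))
    (hC : IsClause C) (hcard : C.card ≤ 2) :
    CollectivelyRational (Maj (n := n) (m := m))
      {B : Fin m → Bool | SatClause B C} := by
  obtain ⟨k, hk⟩ := hodd
  intro P hP
  have hn : 0 < n := by omega
  -- C is nonempty
  have i0 : Fin n := ⟨0, hn⟩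
  obtain ⟨l0, hl0, _⟩ := hP i0
  have hC1 : 1 ≤ C.card := Finset.card_pos.mpr ⟨l0, hl0⟩
  interval_cases hcc : C.card
  · -- card = 1
    obtain ⟨l, hl⟩ := Finset.card_eq_one.mp hcc
    subst hl
    have hall : (Finset.univ.filter fun i => P i l.1 = l.2) = Finset.univ := by
      apply Finset.filter_true_of_mem
      intro i _
      obtain ⟨l', hl', h⟩ := hP i
      simp only [Finset.mem_singleton] at hl'
      subst hl'; exact h
    refine ⟨l, Finset.mem_singleton_self l, maj_of_majority P l.1 l.2 ?_⟩
    rw [hall]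
    simp [Finset.card_univ]; omega
  · -- card = 2
    obtain ⟨l1, l2, hne, hl⟩ := Finset.card_eq_two.mp hcc
    subst hl
    set A1 := Finset.univ.filter fun i => P i l1.1 = l1.2 with hA1
    set A2 := Finset.univ.filter fun i => P i l2.1 = l2.2 with hA2
    have hcover : (Finset.univ : Finset (Fin n)) ⊆ A1 ∪ A2 := by
      intro i _
      obtain ⟨l', hl', h⟩ := hP i
      simp only [Finset.mem_insert, Finset.mem_singleton] at hl'
      rcases hl' with rfl | rfl
      · exact Finset.mem_union_left _ (by simp [hA1, h])
      · exact Finset.mem_union_right _ (by simp [hA2, h])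
    have hle : n ≤ A1.card + A2.card := by
      calc n = (Finset.univ : Finset (Fin n)).card := by simp
        _ ≤ (A1 ∪ A2).card := Finset.card_le_card hcover
        _ ≤ A1.card + A2.card := Finset.card_union_le _ _
    have : n < 2 * A1.card ∨ n < 2 * A2.card := by omega
    rcases this with h | h
    · exact ⟨l1, by simp, maj_of_majority P l1.1 l1.2 h⟩
    · exact ⟨l2, by simp, maj_of_majority P l2.1 l2.2 h⟩
end

section
/- Let n ≥ 3 be odd. If X ⊆ {0,1}^m admits a mifap-assignment whose domain contains at least 3 issues, then the majority rule Maj on n individuals is not collectively rational with respect to X: there exists a profile (B_1,…,B_n) with B_i ∈ X for every i but Maj(B_1,…,B_n) ∉ X. -/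
/-- Ballot `B` extends the partial assignment with domain `J` and values `ρ`. -/
def Extends {m : ℕ} (B : Fin m → Bool) (J : Finset (Fin m)) (ρ : Fin m → Bool) : Prop :=
  ∀ j ∈ J, B j = ρ j

/-- A minimally falsifying partial assignment for `X`: no ballot in `X` extends it,
but every restriction to a proper subset of the domain is extended by some ballot in `X`. -/
def Mifap {m : ℕ} (X : Set (Fin m → Bool)) (J : Finset (Fin m)) (ρ : Fin m → Bool) : Prop :=
  (∀ B ∈ X, ¬ Extends B J ρ) ∧ ∀ J' ⊂ J, ∃ B ∈ X, Extends B J' ρ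

theorem majority_paradox_of_big_mifap
    (n m : ℕ) (hn3 : 3 ≤ n) (hodd : Odd n) (X : Set (Fin m → Bool))
    (J : Finset (Fin m)) (ρ : Fin m → Bool)
    (hmifap : Mifap X J ρ) (hJ : 3 ≤ J.card) :
    ∃ P : Fin n → Fin m → Bool, (∀ i, P i ∈ X) ∧ Maj P ∉ X := by
  obtain ⟨k, hk⟩ := hodd
  have hk1 : 1 ≤ k := by omega
  obtain ⟨j1, j2, j3, hj1, hj2, hj3, h12, h13, h23⟩ :=
    Finset.two_lt_card_iff.mp (by omega : 2 < J.card)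
  obtain ⟨B1, hB1X, hB1⟩ := hmifap.2 (J.erase j1) (Finset.erase_ssubset hj1)
  obtain ⟨B2, hB2X, hB2⟩ := hmifap.2 (J.erase j2) (Finset.erase_ssubset hj2)
  obtain ⟨B3, hB3X, hB3⟩ := hmifap.2 (J.erase j3) (Finset.erase_ssubset hj3)
  have e1 : ∀ j ∈ J, j ≠ j1 → B1 j = ρ j :=
    fun j hjJ hne => hB1 j (Finset.mem_erase.mpr ⟨hne, hjJ⟩)
  have e2 : ∀ j ∈ J, j ≠ j2 → B2 j = ρ j :=
    fun j hjJ hne => hB2 j (Finset.mem_erase.mpr ⟨hne, hjJ⟩)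
  have e3 : ∀ j ∈ J, j ≠ j3 → B3 j = ρ j :=
    fun j hjJ hne => hB3 j (Finset.mem_erase.mpr ⟨hne, hjJ⟩)
  set P : Fin n → Fin m → Bool :=
    fun i => if (i:ℕ) < k then B1 else if (i:ℕ) < 2*k then B2 else B3 with hP
  -- group cardinality bounds
  have hG1 : (Finset.univ.filter fun i : Fin n => (i:ℕ) < k).card ≤ k := by
    calc (Finset.univ.filter fun i : Fin n => (i:ℕ) < k).card
        ≤ (Finset.range k).card := by
          apply Finset.card_le_card_of_injOn (fun i : Fin n => (i:ℕ))
          · intro i hi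
            simp only [Finset.mem_coe, Finset.mem_filter, Finset.mem_univ, true_and] at hi
            exact Finset.mem_range.mpr hi
          · intro a _ b _ hab; exact Fin.ext hab
      _ = k := Finset.card_range k
  have hG2 : (Finset.univ.filter fun i : Fin n => ¬ (i:ℕ) < k ∧ (i:ℕ) < 2*k).card ≤ k := by
    calc (Finset.univ.filter fun i : Fin n => ¬ (i:ℕ) < k ∧ (i:ℕ) < 2*k).card
        ≤ (Finset.range k).card := by
          apply Finset.card_le_card_of_injOn (fun i : Fin n => (i:ℕ) - k)
          · intro i hi
            simp only [Finset.mem_coe, Finset.mem_filter, Finset.mem_univ, true_and] at hi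
            exact Finset.mem_range.mpr (show (i:ℕ) - k < k by omega)
          · intro a ha b hb hab
            simp only [Finset.coe_filter, Set.mem_setOf_eq, Finset.mem_univ,
              true_and] at ha hb
            have hab' : (a:ℕ) - k = (b:ℕ) - k := hab
            exact Fin.ext (by omega)
      _ = k := Finset.card_range k
  have hG3 : (Finset.univ.filter fun i : Fin n => ¬ (i:ℕ) < k ∧ ¬ (i:ℕ) < 2*k).card ≤ k := by
    refine le_trans ?_ hk1
    apply Finset.card_le_one.mpr
    intro a ha b hb
    simp only [Finset.mem_filter, Finset.mem_univ, true_and] at ha hb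
    have ha2 : (a:ℕ) < n := a.isLt
    have hb2 : (b:ℕ) < n := b.isLt
    exact Fin.ext (by omega)
  -- the set of dissenters on issue j ∈ J has size ≤ k
  have key : ∀ j ∈ J, (Finset.univ.filter fun i : Fin n => P i j ≠ ρ j).card ≤ k := by
    intro j hj
    by_cases hc1 : j = j1
    · refine le_trans (Finset.card_le_card ?_) hG1
      intro i hi
      simp only [Finset.mem_filter, Finset.mem_univ, true_and, hP] at hi ⊢
      by_contra h
      rw [if_neg h] at hi
      by_cases h2 : (i:ℕ) < 2*k
      · rw [if_pos h2] at hi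
        exact hi (e2 j hj (by rw [hc1]; exact h12))
      · rw [if_neg h2] at hi
        exact hi (e3 j hj (by rw [hc1]; exact h13))
    · by_cases hc2 : j = j2
      · refine le_trans (Finset.card_le_card ?_) hG2
        intro i hi
        simp only [Finset.mem_filter, Finset.mem_univ, true_and, hP] at hi ⊢
        have h1 : ¬ (i:ℕ) < k := by
          intro h
          rw [if_pos h] at hi
          exact hi (e1 j hj hc1)
        refine ⟨h1, ?_⟩
        by_contra h2
        rw [if_neg h1, if_neg h2] at hi
        exact hi (e3 j hj (by rw [hc2]; exact h23))
      · by_cases hc3 : j = j3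
        · refine le_trans (Finset.card_le_card ?_) hG3
          intro i hi
          simp only [Finset.mem_filter, Finset.mem_univ, true_and, hP] at hi ⊢
          have h1 : ¬ (i:ℕ) < k := by
            intro h
            rw [if_pos h] at hi
            exact hi (e1 j hj hc1)
          refine ⟨h1, ?_⟩
          intro h2
          rw [if_neg h1, if_pos h2] at hi
          exact hi (e2 j hj hc2)
        · have : (Finset.univ.filter fun i : Fin n => P i j ≠ ρ j) = ∅ := by
            apply Finset.filter_eq_empty_iff.mpr
            intro i _
            simp only [hP, not_not]
            by_cases h1 : (i:ℕ) < k
            · rw [if_pos h1]; exact e1 j hj hc1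
            · rw [if_neg h1]
              by_cases h2 : (i:ℕ) < 2*k
              · rw [if_pos h2]; exact e2 j hj hc2
              · rw [if_neg h2]; exact e3 j hj hc3
          rw [this]; simp
  refine ⟨P, ?_, ?_⟩
  · intro i
    by_cases h1 : (i:ℕ) < k
    · simpa [hP, h1] using hB1X
    · by_cases h2 : (i:ℕ) < 2*k
      · simpa [hP, h1, h2] using hB2X
      · simpa [hP, h1, h2] using hB3X
  · intro hMaj
    apply hmifap.1 _ hMaj
    intro j hj
    have hsum := Finset.card_filter_add_card_filter_not
      (s := (Finset.univ : Finset (Fin n))) (p := fun i => P i j = true)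
    have huniv : (Finset.univ : Finset (Fin n)).card = n := by simp
    have hkey := key j hj
    show Maj P j = ρ j
    unfold Maj
    cases hρ : ρ j with
    | false =>
      have hsub : (Finset.univ.filter fun i : Fin n => P i j = true)
          ⊆ (Finset.univ.filter fun i : Fin n => P i j ≠ ρ j) := by
        intro i hi
        simp only [Finset.mem_filter, Finset.mem_univ, true_and] at hi ⊢
        rw [hi, hρ]; simp
      have := le_trans (Finset.card_le_card hsub) hkey
      exact decide_eq_false (by omega)
    | true =>
      have hsub : (Finset.univ.filter fun i : Fin n => ¬ P i j = true)
          ⊆ (Finset.univ.filter fun i : Fin n => P i j ≠ ρ j) := by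
        intro i hi
        simp only [Finset.mem_filter, Finset.mem_univ, true_and] at hi ⊢
        rw [hρ]; exact hi
      have h1 := le_trans (Finset.card_le_card hsub) hkey
      exact decide_eq_true (by omega)
end

section
/- Let X ⊆ {0,1}^m. If every mifap-assignment for X has a domain containing at most 2 issues, then X is expressible by clauses of size at most 2. -/
theorem small_mifaps_implies_expressible_by_2clauses
    (m : ℕ) (X : Set (Fin m → Bool))
    (h : ∀ (J : Finset (Fin m)) (ρ : Fin m → Bool), Mifap X J ρ → J.card ≤ 2) :
    ExpressibleBy2Clauses X := by
  classical
  refine ⟨Finset.univ.filter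
    (fun C => ∃ J ρ, Mifap X J ρ ∧ C = J.image (fun j => (j, !ρ j))), ?_, ?_⟩
  · intro C hC
    rw [Finset.mem_filter] at hC
    obtain ⟨-, J, ρ, hM, rfl⟩ := hC
    constructor
    · intro l₁ h₁ l₂ h₂ he
      rw [Finset.mem_image] at h₁ h₂
      obtain ⟨j₁, -, rfl⟩ := h₁
      obtain ⟨j₂, -, rfl⟩ := h₂
      simp only at he
      subst he
      rfl
    · exact le_trans (Finset.card_image_le) (h J ρ hM)
  · intro B
    constructor
    · intro hB C hC
      rw [Finset.mem_filter] at hC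
      obtain ⟨-, J, ρ, hM, rfl⟩ := hC
      have := hM.1 B hB
      rw [Extends] at this
      push_neg at this
      obtain ⟨j, hj, hne⟩ := this
      exact ⟨(j, !ρ j), Finset.mem_image_of_mem _ hj, by
        cases hb : B j <;> cases hr : ρ j <;> simp_all⟩
    · intro hall
      by_contra hB
      -- find a minimal falsified domain
      set S : Finset (Finset (Fin m)) :=
        Finset.univ.powerset.filter (fun J => ∀ B' ∈ X, ¬ Extends B' J B) with hS
      have huniv : Finset.univ ∈ S := by
        rw [hS, Finset.mem_filter]
        refine ⟨Finset.mem_powerset_self _, fun B' hB' hext => ?_⟩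
        apply hB
        have : B' = B := funext fun j => hext j (Finset.mem_univ j)
        rwa [this] at hB'
      obtain ⟨J, hJS, hmin⟩ := S.exists_min_image Finset.card ⟨_, huniv⟩
      rw [hS, Finset.mem_filter] at hJS
      have hMifap : Mifap X J B := by
        refine ⟨hJS.2, fun J' hJ' => ?_⟩
        by_contra hno
        push_neg at hno
        have hJ'S : J' ∈ S := by
          rw [hS, Finset.mem_filter]
          exact ⟨Finset.mem_powerset.2 (Finset.subset_univ _), hno⟩
        have := hmin J' hJ'S
        exact absurd this (not_le.2 (Finset.card_lt_card hJ'))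
      have hC : J.image (fun j => (j, !B j)) ∈ Finset.univ.filter
          (fun C => ∃ J ρ, Mifap X J ρ ∧ C = J.image (fun j => (j, !ρ j))) := by
        rw [Finset.mem_filter]
        exact ⟨Finset.mem_univ _, J, B, hMifap, rfl⟩
      obtain ⟨l, hl, hsat⟩ := hall _ hC
      rw [Finset.mem_image] at hl
      obtain ⟨j, -, rfl⟩ := hl
      simp at hsat
end

section
/- (Ostrogorski paradox) Let n ≥ 3 be odd, m = 4, and let X_O = {B ∈ {0,1}^4 : B(4) = 1 if and only if at least two of B(1), B(2), B(3) equal 1}. Then the majority rule Maj on n individuals is not collectively rational with respect to X_O: there exists a profile with every ballot in X_O whose majority outcome lies outside X_O. -/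
/-- The Ostrogorski constraint: issue 4 is accepted iff at least two of the
first three issues are accepted. -/
def XO : Set (Fin 4 → Bool) :=
  {B | B 3 = true ↔ ((B 0 && B 1) || (B 0 && B 2) || (B 1 && B 2)) = true}

open Finset

lemma card_filter_fin (n : ℕ) (p : ℕ → Prop) [DecidablePred p] :
    (univ.filter (fun i : Fin n => p i.val)).card = ((range n).filter p).card := by
  rw [card_filter, card_filter]
  exact Fin.sum_univ_eq_sum_range (fun x => if p x then 1 else 0) n

def myP (n k : ℕ) : Fin n → Fin 4 → Bool := fun i j =>
  if i.val = 0 then ![true, true, false, true] j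
  else if i.val = 1 then ![true, false, true, true] j
  else if i.val = 2 then false
  else decide (i.val < 3 + k)

lemma range_count2 (n k : ℕ) (hn : n = 2*k+3) :
    ((range n).filter (fun x => x = 0 ∨ x = 1 ∨ (3 ≤ x ∧ x < 3+k))).card = k + 2 := by
  have h : (range n).filter (fun x => x = 0 ∨ x = 1 ∨ (3 ≤ x ∧ x < 3+k))
      = insert 0 (insert 1 (Ico 3 (3+k))) := by
    ext x; simp [Finset.mem_Ico]; omega
  rw [h, card_insert_of_notMem (by simp), card_insert_of_notMem (by simp), Nat.card_Ico]
  omega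

lemma range_count1 (n k a : ℕ) (hn : n = 2*k+3) (ha : a ≤ 1) :
    ((range n).filter (fun x => x = a ∨ (3 ≤ x ∧ x < 3+k))).card = k + 1 := by
  have h : (range n).filter (fun x => x = a ∨ (3 ≤ x ∧ x < 3+k))
      = insert a (Ico 3 (3+k)) := by
    ext x; simp [Finset.mem_Ico]; omega
  rw [h, card_insert_of_notMem (by simp; omega), Nat.card_Ico]
  omega

theorem ostrogorski_paradox (n : ℕ) (hn3 : 3 ≤ n) (hodd : Odd n) :
    ∃ P : Fin n → Fin 4 → Bool, (∀ i, P i ∈ XO) ∧ Maj P ∉ XO := by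
  obtain ⟨t, ht⟩ := hodd
  obtain ⟨k, hn⟩ : ∃ k, n = 2*k + 3 := ⟨t - 1, by omega⟩
  refine ⟨myP n k, ?_, ?_⟩
  · intro i
    simp only [XO, Set.mem_setOf_eq, myP]
    by_cases h0 : i.val = 0
    · simp [h0]
    by_cases h1 : i.val = 1
    · simp [h0, h1]
    by_cases h2 : i.val = 2
    · simp [h0, h1, h2]
    · simp only [h0, h1, h2, if_false]
      by_cases hc : i.val < 3 + k <;> simp [hc]
  · -- compute majority outcomes
    have key : ∀ (j : Fin 4) (q : ℕ → Prop) [DecidablePred q],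
        (∀ i : Fin n, myP n k i j = true ↔ q i.val) →
        (univ.filter fun i : Fin n => myP n k i j = true).card
          = ((range n).filter q).card := by
      intro j q _ hq
      rw [show (univ.filter fun i : Fin n => myP n k i j = true)
            = univ.filter (fun i : Fin n => q i.val) from
          filter_congr (fun i _ => by rw [hq i]), card_filter_fin]
    have m0 : Maj (myP n k) 0 = true := by
      unfold Maj
      rw [key 0 (fun x => x = 0 ∨ x = 1 ∨ (3 ≤ x ∧ x < 3+k)) ?_, range_count2 n k hn]
      · exact decide_eq_true (by omega)
      · intro i
        simp only [myP]
        by_cases h0 : i.val = 0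
        · simp [h0]
        by_cases h1 : i.val = 1
        · simp [h0, h1]
        by_cases h2 : i.val = 2
        · simp [h0, h1, h2]
        · simp only [h0, h1, h2, if_false, decide_eq_true_eq, false_or]
          omega
    have m1 : Maj (myP n k) 1 = false := by
      unfold Maj
      rw [key 1 (fun x => x = 0 ∨ (3 ≤ x ∧ x < 3+k)) ?_, range_count1 n k 0 hn (by omega)]
      · exact decide_eq_false (by omega)
      · intro i
        simp only [myP]
        by_cases h0 : i.val = 0
        · simp [h0]
        by_cases h1 : i.val = 1
        · simp [h0, h1]
        by_cases h2 : i.val = 2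
        · simp [h0, h1, h2]
        · simp only [h0, h1, h2, if_false, decide_eq_true_eq, false_or]
          omega
    have m2 : Maj (myP n k) 2 = false := by
      unfold Maj
      rw [key 2 (fun x => x = 1 ∨ (3 ≤ x ∧ x < 3+k)) ?_, range_count1 n k 1 hn (by omega)]
      · exact decide_eq_false (by omega)
      · intro i
        simp only [myP]
        by_cases h0 : i.val = 0
        · simp [h0]
        by_cases h1 : i.val = 1
        · simp [h0, h1]
        by_cases h2 : i.val = 2
        · simp [h0, h1, h2]
        · simp only [h0, h1, h2, if_false, decide_eq_true_eq, false_or]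
          omega
    have m3 : Maj (myP n k) 3 = true := by
      unfold Maj
      rw [key 3 (fun x => x = 0 ∨ x = 1 ∨ (3 ≤ x ∧ x < 3+k)) ?_, range_count2 n k hn]
      · exact decide_eq_true (by omega)
      · intro i
        simp only [myP]
        by_cases h0 : i.val = 0
        · simp [h0]
        by_cases h1 : i.val = 1
        · simp [h0, h1]
        by_cases h2 : i.val = 2
        · simp [h0, h1, h2]
        · simp only [h0, h1, h2, if_false, decide_eq_true_eq, false_or]
          omega
    intro hmem
    rw [XO, Set.mem_setOf_eq, m0, m1, m2, m3] at hmem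
    simp at hmem
end
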